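/- arXiv:2104.04647 — 2 statements merged into one kernel-verified Lean document; each statement's English description precedes it below -/
import Mathlib

section
/- (Neyman variance of the difference in means.) In a completely randomized experiment where a uniformly random subset S of size m of {1,…,M} is treated, with fixed potential outcomes a_i(1), a_i(0), the difference-in-means estimator τ̂ = m^{-1} Σ_{i∈S} a_i(1) − (M−m)^{-1} Σ_{i∉S} a_i(0) has variance Var(τ̂) = S₁²/m + S₀²/(M−m) − S_τ²/M, where S_z² = (M−1)^{-1} Σ_{i=1}^M ( a_i(z) − ā(z) )² for z = 0,1, S_τ² = (M−1)^{-1} Σ_{i=1}^M ( τ_i − τ̄ )², τ_i = a_i(1) − a_i(0), ā(z) and τ̄ are the corresponding population averages. -/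
/-!
Since `∑ i ∉ S, a₀ i = ∑ i, a₀ i - ∑ i ∈ S, a₀ i`, the estimator is, up to a constant, the sample
sum of `w i = a₁ i / m + a₀ i / (M - m)`. For a uniform `m`-subset `S` one has
`P(i ∈ S) = m / M` and `P(i ∈ S ∧ j ∈ S) = m (m - 1) / (M (M - 1))` for `i ≠ j`, which gives the
sampling-without-replacement variance `m (M - m) / (M (M - 1)) * ∑ i, (w i - w̄) ^ 2` of a sample
sum. With `u`, `v` the centred potential outcomes, `w i - w̄ = u i / m + v i / (M - m)`, and the
summand equals `(u i ^ 2 / m + v i ^ 2 / (M - m) - (u i - v i) ^ 2 / M) / (M - 1)` term by term.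
-/

open Finset
open scoped BigOperators

lemma card_filter_powersetCard_subset_mul_choose {α : Type*} [DecidableEq α] {s t : Finset α}
    (hst : s ⊆ t) (n : ℕ) :
    #{u ∈ t.powersetCard n | s ⊆ u} * (#t).choose #s = (#t).choose n * n.choose #s := by
  rcases le_or_gt #s n with hsn | hns
  · rw [card_filter_powersetCard_subset s t n hst hsn, Nat.choose_mul hsn, mul_comm]
  · have hempty : {u ∈ t.powersetCard n | s ⊆ u} = ∅ := by
      refine filter_false_of_mem fun u hu hsu => ?_
      have := card_le_card hsu
      rw [(mem_powersetCard.mp hu).2] at this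
      omega
    rw [hempty, Nat.choose_eq_zero_of_lt hns]
    simp

lemma sum_sub_expect_eq_zero {ι K : Type*} [Fintype ι] [Field K] [CharZero K] (w : ι → K) :
    ∑ i, (w i - 𝔼 j, w j) = 0 := by
  rcases isEmpty_or_nonempty ι with hι | hι
  · simp
  rw [sum_sub_distrib, sum_const, card_univ, Fintype.expect_eq_sum_div_card, nsmul_eq_mul,
    mul_div_cancel₀ _ (Nat.cast_ne_zero.mpr Fintype.card_ne_zero), sub_self]

section Sampling

variable {ι : Type*} [Fintype ι] [DecidableEq ι] {k : ℕ}

lemma expect_powersetCard_ite_subset (hk : k ≤ Fintype.card ι) (T : Finset ι) :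
    𝔼 S ∈ powersetCard k univ, (if T ⊆ S then 1 else 0 : ℝ)
      = k.choose #T / (Fintype.card ι).choose #T := by
  have hT : #T ≤ Fintype.card ι := card_le_univ T
  have hcount := card_filter_powersetCard_subset_mul_choose (subset_univ T) k
  rw [card_univ] at hcount
  have hpos : ((Fintype.card ι).choose k : ℝ) ≠ 0 := by
    exact_mod_cast (Nat.choose_pos hk).ne'
  have hposT : ((Fintype.card ι).choose #T : ℝ) ≠ 0 := by
    exact_mod_cast (Nat.choose_pos hT).ne'
  rw [expect_eq_sum_div_card, ← sum_filter, sum_const, nsmul_one, card_powersetCard, card_univ,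
    div_eq_div_iff hpos hposT]
  exact_mod_cast hcount.trans (mul_comm _ _)

lemma expect_powersetCard_ite_mem (hk : k ≤ Fintype.card ι) (i : ι) :
    𝔼 S ∈ powersetCard k univ, (if i ∈ S then 1 else 0 : ℝ) = k / Fintype.card ι := by
  simpa using expect_powersetCard_ite_subset hk {i}

lemma expect_powersetCard_ite_mem_and_mem_of_ne (hk : k ≤ Fintype.card ι) {i j : ι}
    (hij : i ≠ j) :
    𝔼 S ∈ powersetCard k univ, (if i ∈ S ∧ j ∈ S then 1 else 0 : ℝ)
      = k * (k - 1) / (Fintype.card ι * (Fintype.card ι - 1)) := by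
  have h := expect_powersetCard_ite_subset hk {i, j}
  simp only [insert_subset_iff, singleton_subset_iff, card_pair hij, Nat.cast_choose_two] at h
  rw [h]
  field_simp

lemma expect_powersetCard_ite_mem_and_mem (hk : k ≤ Fintype.card ι) (i j : ι) :
    𝔼 S ∈ powersetCard k univ, (if i ∈ S ∧ j ∈ S then 1 else 0 : ℝ)
      = k * (k - 1) / (Fintype.card ι * (Fintype.card ι - 1))
        + if i = j then
            (k / Fintype.card ι - k * (k - 1) / (Fintype.card ι * (Fintype.card ι - 1)) : ℝ)
          else 0 := by
  by_cases hij : i = j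
  · subst hij
    simpa using expect_powersetCard_ite_mem hk i
  · simp [hij, expect_powersetCard_ite_mem_and_mem_of_ne hk hij]

lemma sum_eq_sum_univ_ite_mul {R : Type*} [NonAssocSemiring R] (S : Finset ι) (w : ι → R) :
    ∑ i ∈ S, w i = ∑ i, (if i ∈ S then 1 else 0) * w i := by
  simp [sum_ite_mem]

lemma expect_powersetCard_sum (hk : k ≤ Fintype.card ι) (w : ι → ℝ) :
    𝔼 S ∈ powersetCard k univ, ∑ i ∈ S, w i = k / Fintype.card ι * ∑ i, w i := by
  rw [expect_congr rfl fun S _ => sum_eq_sum_univ_ite_mul S w, expect_sum_comm, mul_sum]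
  simp_rw [← expect_mul, expect_powersetCard_ite_mem hk]

lemma sq_sum_eq_sum_sum_ite_mul {R : Type*} [CommSemiring R] (S : Finset ι) (w : ι → R) :
    (∑ i ∈ S, w i) ^ 2 = ∑ i, ∑ j, (if i ∈ S ∧ j ∈ S then 1 else 0) * (w i * w j) := by
  rw [sum_eq_sum_univ_ite_mul, sq, sum_mul_sum]
  refine sum_congr rfl fun i _ => sum_congr rfl fun j _ => ?_
  split_ifs <;> simp_all

lemma expect_powersetCard_sq_sum (hk : k ≤ Fintype.card ι) (w : ι → ℝ) :
    𝔼 S ∈ powersetCard k univ, (∑ i ∈ S, w i) ^ 2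
      = k * (k - 1) / (Fintype.card ι * (Fintype.card ι - 1)) * (∑ i, w i) ^ 2
        + (k / Fintype.card ι - k * (k - 1) / (Fintype.card ι * (Fintype.card ι - 1)))
          * ∑ i, w i ^ 2 := by
  rw [expect_congr rfl fun S _ => sq_sum_eq_sum_sum_ite_mul S w, expect_sum_comm]
  simp_rw [expect_sum_comm, ← expect_mul, expect_powersetCard_ite_mem_and_mem hk, add_mul,
    sum_add_distrib, ite_mul, zero_mul, sum_ite_eq, mem_univ, if_true, ← mul_sum, sq]
  rw [← sum_mul]

lemma expect_powersetCard_sq_sub_expect_sum (hk : k ≤ Fintype.card ι) (hι : 1 < Fintype.card ι)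
    (w : ι → ℝ) :
    𝔼 S ∈ powersetCard k univ, (∑ i ∈ S, w i - 𝔼 T ∈ powersetCard k univ, ∑ i ∈ T, w i) ^ 2
      = k * (Fintype.card ι - k) / (Fintype.card ι * (Fintype.card ι - 1))
        * ∑ i, (w i - 𝔼 j, w j) ^ 2 := by
  have hn : (Fintype.card ι : ℝ) ≠ 0 := by positivity
  have hn1 : (Fintype.card ι : ℝ) - 1 ≠ 0 := sub_ne_zero.mpr (by exact_mod_cast hι.ne')
  have hmean : 𝔼 T ∈ powersetCard k univ, ∑ i ∈ T, w i = k * 𝔼 j, w j := by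
    rw [expect_powersetCard_sum hk, Fintype.expect_eq_sum_div_card]
    ring
  have hcenter : ∀ S ∈ powersetCard k univ,
      (∑ i ∈ S, w i - k * 𝔼 j, w j) ^ 2 = (∑ i ∈ S, (w i - 𝔼 j, w j)) ^ 2 := by
    intro S hS
    rw [sum_sub_distrib, sum_const, (mem_powersetCard.mp hS).2, nsmul_eq_mul]
  rw [hmean, expect_congr rfl hcenter, expect_powersetCard_sq_sum hk, sum_sub_expect_eq_zero]
  field_simp
  ring

end Sampling

theorem stmt_8_general (M m : ℕ) (hm : 0 < m) (hM : m < M)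
    (a1 a0 : Fin M → ℝ)
    (E : ((Finset (Fin M)) → ℝ) → ℝ)
    (hE : ∀ f, E f = ((Finset.powersetCard m (Finset.univ : Finset (Fin M))).card : ℝ)⁻¹ *
      ∑ S ∈ Finset.powersetCard m (Finset.univ : Finset (Fin M)), f S)
    (τhat : Finset (Fin M) → ℝ)
    (hτhat : ∀ S, τhat S = (m : ℝ)⁻¹ * ∑ i ∈ S, a1 i - ((M : ℝ) - m)⁻¹ * ∑ i ∈ Sᶜ, a0 i)
    (abar1 abar0 τbar S1sq S0sq Stausq : ℝ)
    (habar1 : abar1 = (M : ℝ)⁻¹ * ∑ i, a1 i)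
    (habar0 : abar0 = (M : ℝ)⁻¹ * ∑ i, a0 i)
    (hτbar : τbar = (M : ℝ)⁻¹ * ∑ i, (a1 i - a0 i))
    (hS1 : S1sq = ((M : ℝ) - 1)⁻¹ * ∑ i, (a1 i - abar1) ^ 2)
    (hS0 : S0sq = ((M : ℝ) - 1)⁻¹ * ∑ i, (a0 i - abar0) ^ 2)
    (hSt : Stausq = ((M : ℝ) - 1)⁻¹ * ∑ i, ((a1 i - a0 i) - τbar) ^ 2) :
    E (fun S => (τhat S - E τhat) ^ 2)
      = S1sq / m + S0sq / ((M : ℝ) - m) - Stausq / M := by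
  have hmR : (m : ℝ) ≠ 0 := by positivity
  have hMR : (M : ℝ) ≠ 0 := by exact_mod_cast (by omega : M ≠ 0)
  have hMm : (M : ℝ) - m ≠ 0 := sub_ne_zero.mpr (by exact_mod_cast hM.ne')
  have hM1 : (M : ℝ) - 1 ≠ 0 := sub_ne_zero.mpr (by exact_mod_cast (by omega : M ≠ 1))
  set P := powersetCard m (univ : Finset (Fin M))
  have hEP : ∀ f, E f = 𝔼 S ∈ P, f S := fun f => by
    rw [hE, expect_eq_sum_div_card, inv_mul_eq_div]
  set w : Fin M → ℝ := fun i => a1 i / m + a0 i / (M - m)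
  have hτw : ∀ S, τhat S = ∑ i ∈ S, w i - (∑ i, a0 i) / (M - m) := by
    intro S
    rw [hτhat, ← sum_compl_add_sum S a0, sum_add_distrib, ← sum_div, ← sum_div]
    ring
  have hdev : ∀ S, τhat S - E τhat = ∑ i ∈ S, w i - 𝔼 T ∈ P, ∑ i ∈ T, w i := by
    intro S
    rw [hEP, expect_congr rfl fun T _ => hτw T, expect_sub_distrib,
      expect_const (powersetCard_nonempty.mpr (by simpa using hM.le)), hτw]
    ring
  have hwbar : 𝔼 j, w j = abar1 / m + abar0 / (M - m) := by
    rw [expect_add_distrib, ← expect_div, ← expect_div, Fintype.expect_eq_sum_div_card,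
      Fintype.expect_eq_sum_div_card, habar1, habar0, Fintype.card_fin, inv_mul_eq_div,
      inv_mul_eq_div]
  have hτbar_eq : τbar = abar1 - abar0 := by
    rw [hτbar, habar1, habar0, sum_sub_distrib]
    ring
  rw [hEP]
  simp_rw [hdev]
  rw [expect_powersetCard_sq_sub_expect_sum (by simpa using hM.le) (by simp; omega), hS1, hS0, hSt,
    Fintype.card_fin, mul_sum, mul_sum, mul_sum, mul_sum, sum_div, sum_div, sum_div,
    ← sum_add_distrib, ← sum_sub_distrib]
  refine sum_congr rfl fun i _ => ?_
  rw [hwbar, hτbar_eq]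
  simp only [w]
  field_simp
  ring

/-- Neyman's variance formula for the difference-in-means estimator in a
completely randomized experiment. -/
theorem stmt_8 (M m : ℕ) (hM2 : 2 ≤ M) (hm : 0 < m) (hM : m < M)
    (a1 a0 : Fin M → ℝ)
    (E : ((Finset (Fin M)) → ℝ) → ℝ)
    (hE : ∀ f, E f = ((Finset.powersetCard m (Finset.univ : Finset (Fin M))).card : ℝ)⁻¹ *
      ∑ S ∈ Finset.powersetCard m (Finset.univ : Finset (Fin M)), f S)
    (τhat : Finset (Fin M) → ℝ)
    (hτhat : ∀ S, τhat S = (m : ℝ)⁻¹ * ∑ i ∈ S, a1 i - ((M : ℝ) - m)⁻¹ * ∑ i ∈ Sᶜ, a0 i)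
    (abar1 abar0 τbar S1sq S0sq Stausq : ℝ)
    (habar1 : abar1 = (M : ℝ)⁻¹ * ∑ i, a1 i)
    (habar0 : abar0 = (M : ℝ)⁻¹ * ∑ i, a0 i)
    (hτbar : τbar = (M : ℝ)⁻¹ * ∑ i, (a1 i - a0 i))
    (hS1 : S1sq = ((M : ℝ) - 1)⁻¹ * ∑ i, (a1 i - abar1) ^ 2)
    (hS0 : S0sq = ((M : ℝ) - 1)⁻¹ * ∑ i, (a0 i - abar0) ^ 2)
    (hSt : Stausq = ((M : ℝ) - 1)⁻¹ * ∑ i, ((a1 i - a0 i) - τbar) ^ 2) :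
    E (fun S => (τhat S - E τhat) ^ 2)
      = S1sq / m + S0sq / ((M : ℝ) - m) - Stausq / M :=
  stmt_8_general M m hm hM a1 a0 E hE τhat hτhat abar1 abar0 τbar S1sq S0sq Stausq habar1 habar0
    hτbar hS1 hS0 hSt
end

section
/- (Horvitz–Thompson dominates Hájek in an extreme case.) Consider a cluster-randomized experiment with M clusters (M even), treated fraction e = 1/2 (a uniformly random subset of M/2 clusters is treated), cluster sizes n_i, N = Σ n_i, and fixed potential outcomes Y_{ij}(z) with both population means zero: N^{-1} Σ_{ij} Y_{ij}(1) = N^{-1} Σ_{ij} Y_{ij}(0) = 0 (so τ = 0). Let τ̂_T = (eN)^{-1} Σ_{ij∈T} Y_{ij} − ((1−e)N)^{-1} Σ_{ij∈C} Y_{ij} (Horvitz–Thompson) and τ̂_I = n_T^{-1} Σ_{ij∈T} Y_{ij} − n_C^{-1} Σ_{ij∈C} Y_{ij} (Hájek), where T and C are the treated and control units and n_T, n_C their cardinalities. Then E[(τ̂_T − τ)²] ≤ E[(τ̂_I − τ)²]. -/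
/-!
Pair each treated set `S` with its complement. When both population totals vanish, the
Horvitz–Thompson estimates at `S` and `Sᶜ` are `±2(a + b)/N`, where `a`, `b` are the treated
and control totals over `S`, while the Hájek estimates are `a/p + b/q` and `-(a/q + b/p)`,
with `p`, `q` the numbers of units in `S` and `Sᶜ`. The two Hájek values add up to
`(a + b)(1/p + 1/q)`, so by `(x + y)² ≤ 2(x² + y²)` and the harmonic–arithmetic mean inequality
`4/(p + q) ≤ 1/p + 1/q` their squares add up to at least those of the Horvitz–Thompson
values. Summing over the pairs `{S, Sᶜ}` gives the claim.
-/

open Finset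

section Inequalities

variable {K : Type*} [Field K] [LinearOrder K] [IsStrictOrderedRing K]

lemma four_div_add_le_inv_add_inv {p q : K} (hp : 0 < p) (hq : 0 < q) :
    4 / (p + q) ≤ p⁻¹ + q⁻¹ := by
  rw [inv_add_inv hp.ne' hq.ne', div_le_div_iff₀ (by positivity) (by positivity)]
  nlinarith [four_mul_le_sq_add p q]

lemma two_mul_sq_div_add_le_sq_add_sq (a b : K) {p q : K} (hp : 0 < p) (hq : 0 < q) :
    2 * (2 * (a + b) / (p + q)) ^ 2 ≤ (a / p + b / q) ^ 2 + (a / q + b / p) ^ 2 := by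
  have hsum : a / p + b / q + (a / q + b / p) = (a + b) * (p⁻¹ + q⁻¹) := by ring
  have hhm := four_div_add_le_inv_add_inv hp hq
  calc 2 * (2 * (a + b) / (p + q)) ^ 2 = (a + b) ^ 2 * (4 / (p + q)) ^ 2 / 2 := by ring
    _ ≤ (a + b) ^ 2 * (p⁻¹ + q⁻¹) ^ 2 / 2 := by gcongr
    _ ≤ (a / p + b / q) ^ 2 + (a / q + b / p) ^ 2 := by
      rw [← mul_pow, ← hsum, div_le_iff₀ two_pos, mul_comm]
      exact add_sq_le

end Inequalities

lemma Finset.sum_le_sum_of_involution {α β : Type*} [AddCommMonoid β] [LinearOrder β]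
    [IsOrderedCancelAddMonoid β] {s : Finset α} {f g : α → β} (σ : α → α)
    (hσ : ∀ a ∈ s, σ a ∈ s) (hσσ : ∀ a ∈ s, σ (σ a) = a)
    (h : ∀ a ∈ s, f a + f (σ a) ≤ g a + g (σ a)) :
    ∑ a ∈ s, f a ≤ ∑ a ∈ s, g a := by
  have hcomp : ∀ u : α → β, ∑ a ∈ s, u (σ a) = ∑ a ∈ s, u a := fun u =>
    sum_nbij' σ σ hσ hσ hσσ hσσ fun _ _ => rfl
  have hdouble := sum_le_sum h
  rw [sum_add_distrib, sum_add_distrib, hcomp f, hcomp g] at hdouble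
  exact not_lt.mp fun hlt => (add_lt_add hlt hlt).not_ge hdouble

lemma Finset.compl_mem_powersetCard_univ {α : Type*} [Fintype α] [DecidableEq α] {m : ℕ}
    (hcard : Fintype.card α = 2 * m) {S : Finset α} (hS : S ∈ powersetCard m univ) :
    Sᶜ ∈ powersetCard m univ := by
  rw [mem_powersetCard_univ] at hS ⊢
  rw [card_compl, hS, hcard]
  omega

lemma Finset.sum_compl_eq_neg {ι G : Type*} [Fintype ι] [DecidableEq ι] [AddCommGroup G]
    {f : ι → G} (hf : ∑ i, f i = 0) (S : Finset ι) :
    ∑ i ∈ Sᶜ, f i = -∑ i ∈ S, f i :=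
  eq_neg_of_add_eq_zero_left (by rw [sum_compl_add_sum, hf])

section Estimators

variable {ι : Type*} [Fintype ι] [DecidableEq ι]

/-- Cluster `i` has `w i` units and potential-outcome totals `y₁ i`, `y₀ i`; `S` is the set
of treated clusters and `e` the treated fraction. -/
noncomputable def horvitzThompson (e : ℝ) (w y₁ y₀ : ι → ℝ) (S : Finset ι) : ℝ :=
  (e * ∑ i, w i)⁻¹ * ∑ i ∈ S, y₁ i - ((1 - e) * ∑ i, w i)⁻¹ * ∑ i ∈ Sᶜ, y₀ i

noncomputable def hajek (w y₁ y₀ : ι → ℝ) (S : Finset ι) : ℝ :=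
  (∑ i ∈ S, w i)⁻¹ * ∑ i ∈ S, y₁ i - (∑ i ∈ Sᶜ, w i)⁻¹ * ∑ i ∈ Sᶜ, y₀ i

variable {w y₁ y₀ : ι → ℝ}

lemma horvitzThompson_sq_add_compl_sq_le_hajek (h₁ : ∑ i, y₁ i = 0) (h₀ : ∑ i, y₀ i = 0)
    {S : Finset ι} (hS : 0 < ∑ i ∈ S, w i) (hSc : 0 < ∑ i ∈ Sᶜ, w i) :
    horvitzThompson (1 / 2) w y₁ y₀ S ^ 2 + horvitzThompson (1 / 2) w y₁ y₀ Sᶜ ^ 2 ≤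
      hajek w y₁ y₀ S ^ 2 + hajek w y₁ y₀ Sᶜ ^ 2 := by
  simp only [horvitzThompson, hajek, compl_compl, ← sum_add_sum_compl S w,
    sum_compl_eq_neg h₁ S, sum_compl_eq_neg h₀ S]
  generalize ∑ i ∈ S, y₁ i = a, ∑ i ∈ S, y₀ i = b at *
  generalize ∑ i ∈ S, w i = p, ∑ i ∈ Sᶜ, w i = q at *
  have hT : (1 / 2 * (p + q))⁻¹ * a - ((1 - 1 / 2) * (p + q))⁻¹ * -b =
      2 * (a + b) / (p + q) := by
    field_simp
    ring
  have hTc : (1 / 2 * (p + q))⁻¹ * -a - ((1 - 1 / 2) * (p + q))⁻¹ * b =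
      -(2 * (a + b) / (p + q)) := by
    field_simp
    ring
  have hI : p⁻¹ * a - q⁻¹ * -b = a / p + b / q := by ring
  have hIc : q⁻¹ * -a - p⁻¹ * b = -(a / q + b / p) := by ring
  rw [hT, hTc, hI, hIc, neg_sq, neg_sq, ← two_mul]
  exact two_mul_sq_div_add_le_sq_add_sq a b hS hSc

end Estimators

/-- With `e = 1/2` and both potential-outcome population means equal to zero,
the Horvitz–Thompson estimator has no larger mean squared error than the
Hájek (difference-in-means) estimator. -/
theorem stmt_15 (M m : ℕ) (hM : M = 2 * m) (hm : 0 < m)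
    (n : Fin M → ℕ) (hn : ∀ i, 1 ≤ n i)
    (N : ℕ) (hN : N = ∑ i, n i)
    (Y1 Y0 : (i : Fin M) → Fin (n i) → ℝ)
    (hmean1 : (N : ℝ)⁻¹ * ∑ i, ∑ j, Y1 i j = 0)
    (hmean0 : (N : ℝ)⁻¹ * ∑ i, ∑ j, Y0 i j = 0)
    (τ : ℝ) (hτ : τ = (N : ℝ)⁻¹ * ∑ i, ∑ j, (Y1 i j - Y0 i j))
    (τT τI : Finset (Fin M) → ℝ)
    (hτT : ∀ S, τT S =
      ((1 / 2 : ℝ) * N)⁻¹ * ∑ i ∈ S, ∑ j, Y1 i j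
        - ((1 - 1 / 2 : ℝ) * N)⁻¹ * ∑ i ∈ Sᶜ, ∑ j, Y0 i j)
    (hτI : ∀ S, τI S =
      ((∑ i ∈ S, n i : ℕ) : ℝ)⁻¹ * ∑ i ∈ S, ∑ j, Y1 i j
        - ((∑ i ∈ Sᶜ, n i : ℕ) : ℝ)⁻¹ * ∑ i ∈ Sᶜ, ∑ j, Y0 i j) :
    ((Finset.powersetCard m (Finset.univ : Finset (Fin M))).card : ℝ)⁻¹ *
      ∑ S ∈ Finset.powersetCard m (Finset.univ : Finset (Fin M)), (τT S - τ) ^ 2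
    ≤ ((Finset.powersetCard m (Finset.univ : Finset (Fin M))).card : ℝ)⁻¹ *
      ∑ S ∈ Finset.powersetCard m (Finset.univ : Finset (Fin M)), (τI S - τ) ^ 2 := by
  have hcard : Fintype.card (Fin M) = 2 * m := by rw [Fintype.card_fin, hM]
  have hpos : ∀ S ∈ powersetCard m (univ : Finset (Fin M)), 0 < ∑ i ∈ S, (n i : ℝ) := by
    intro S hS
    have hne : S.Nonempty := card_pos.mp ((mem_powersetCard_univ.mp hS).symm ▸ hm)
    exact sum_pos (fun i _ => by exact_mod_cast hn i) hne
  have hNw : (N : ℝ) = ∑ i, (n i : ℝ) := by rw [hN, Nat.cast_sum]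
  have hN0 : (N : ℝ)⁻¹ ≠ 0 := by
    refine inv_ne_zero ?_
    rw [hNw]
    exact (sum_pos (fun i _ => by exact_mod_cast hn i) ⟨⟨0, by omega⟩, mem_univ _⟩).ne'
  have hsum1 := (mul_eq_zero.mp hmean1).resolve_left hN0
  have hsum0 := (mul_eq_zero.mp hmean0).resolve_left hN0
  have hτ0 : τ = 0 := by simp only [hτ, sum_sub_distrib, hsum1, hsum0, sub_zero, mul_zero]
  have hT : τT = horvitzThompson (1 / 2) (fun i => n i) (fun i => ∑ j, Y1 i j)
      (fun i => ∑ j, Y0 i j) := funext fun S => by rw [hτT, horvitzThompson, hNw]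
  have hI : τI = hajek (fun i => n i) (fun i => ∑ j, Y1 i j) (fun i => ∑ j, Y0 i j) :=
    funext fun S => by simp only [hτI, hajek, Nat.cast_sum]
  rw [hτ0, hT, hI]
  simp only [sub_zero]
  refine mul_le_mul_of_nonneg_left ?_ (by positivity)
  exact sum_le_sum_of_involution compl (fun S => compl_mem_powersetCard_univ hcard)
    (fun S _ => compl_compl S) fun S hS => horvitzThompson_sq_add_compl_sq_le_hajek hsum1 hsum0
      (hpos S hS) (hpos Sᶜ (compl_mem_powersetCard_univ hcard hS))
end
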